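/- arXiv:1401.7802 — 4 statements merged into one kernel-verified Lean document; each statement's English description precedes it below -/
import Mathlib

section
/- The cubic polynomial in λ with coefficients a = -108 α₁³, b = -27 α₁² (1+α₁+α₂)² - 324 α₁² (1-(1+α₁)(1+α₂)), and appropriate c, d (the discriminant polynomial of the M=2 spectral cubic) has three real roots whenever α₁, α₂ > 0. -/
/-!
The discriminant factors as `2⁴·3¹² α₁⁷ α₂ ((1 + α₁ + α₂)³ - 27 α₁ α₂)³`, and the last factor
is nonnegative by the AM–GM inequality for the three numbers `1, α₁, α₂`.
-/

theorem mul_mul_le_add_add_pow_three {R : Type*} [CommRing R] [LinearOrder R]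
    [IsStrictOrderedRing R] {x y z : R} (hx : 0 ≤ x) (hy : 0 ≤ y) (hz : 0 ≤ z) :
    27 * (x * y * z) ≤ (x + y + z) ^ 3 := by
  nlinarith [sq_nonneg (x - y), sq_nonneg (y - z), sq_nonneg (z - x),
    mul_nonneg hx (sq_nonneg (y - z)), mul_nonneg hy (sq_nonneg (z - x)),
    mul_nonneg hz (sq_nonneg (x - y)), mul_nonneg (add_nonneg (add_nonneg hx hy) hz)
      (add_nonneg (add_nonneg (sq_nonneg (x - y)) (sq_nonneg (y - z))) (sq_nonneg (z - x)))]

def m2Cubic (α₁ α₂ : ℝ) : Cubic ℝ where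
  a := -108 * α₁ ^ 3
  b := -27 * α₁ ^ 2 * (1 + α₁ + α₂) ^ 2 - 324 * α₁ ^ 2 * (1 - (1 + α₁) * (1 + α₂))
  c := -216 * α₁ * (1 + α₁ + α₂) ^ 2 * (1 - (1 + α₁) * (1 + α₂))
    - 324 * α₁ * (1 - (1 + α₁) * (1 + α₂)) ^ 2
    - 162 * α₁ * (1 + α₁ + α₂) * (α₁ * (1 + α₁) + α₂ * (1 + α₂) + α₁ * α₂ * (α₁ + α₂))
  d := -27 * (α₁ - 1) ^ 2 * (α₁ - α₂) ^ 2 * (α₂ - 1) ^ 2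

theorem m2Cubic_discr (α₁ α₂ : ℝ) :
    (m2Cubic α₁ α₂).discr
      = 2 ^ 4 * 3 ^ 12 * α₁ ^ 7 * α₂ * ((1 + α₁ + α₂) ^ 3 - 27 * α₁ * α₂) ^ 3 := by
  simp only [Cubic.discr, m2Cubic]
  ring

theorem m2Cubic_discr_nonneg {α₁ α₂ : ℝ} (h₁ : 0 ≤ α₁) (h₂ : 0 ≤ α₂) :
    0 ≤ (m2Cubic α₁ α₂).discr := by
  have hamgm : 0 ≤ (1 + α₁ + α₂) ^ 3 - 27 * α₁ * α₂ := by
    have := mul_mul_le_add_add_pow_three zero_le_one h₁ h₂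
    linarith
  rw [m2Cubic_discr]
  positivity

/-- The discriminant cubic of the M = 2 spectral problem has three real roots for
α₁, α₂ > 0: the discriminant of aλ³+bλ²+cλ+d with the given coefficients is
nonnegative. -/
theorem m2_discriminant_cubic_three_real_roots (α₁ α₂ : ℝ) (h₁ : 0 < α₁) (h₂ : 0 < α₂) :
    let a : ℝ := -108 * α₁ ^ 3
    let b : ℝ := -27 * α₁ ^ 2 * (1 + α₁ + α₂) ^ 2 - 324 * α₁ ^ 2 * (1 - (1 + α₁) * (1 + α₂))
    let c : ℝ := -216 * α₁ * (1 + α₁ + α₂) ^ 2 * (1 - (1 + α₁) * (1 + α₂))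
        - 324 * α₁ * (1 - (1 + α₁) * (1 + α₂)) ^ 2
        - 162 * α₁ * (1 + α₁ + α₂) *
            (α₁ * (1 + α₁) + α₂ * (1 + α₂) + α₁ * α₂ * (α₁ + α₂))
    let d : ℝ := -27 * (α₁ - 1) ^ 2 * (α₁ - α₂) ^ 2 * (α₂ - 1) ^ 2
    0 ≤ 18 * a * b * c * d - 4 * b ^ 3 * d + b ^ 2 * c ^ 2 - 4 * a * c ^ 3
        - 27 * a ^ 2 * d ^ 2 := by
  intro a b c d
  convert m2Cubic_discr_nonneg h₁.le h₂.le using 1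
  simp only [Cubic.discr, m2Cubic]
  ring
end

section
/- For M=2 with α₁ = α₂ = α, the edge points λ_± = (-1 + 20α + 8α² ± (1+8α)^{3/2})/(8α) satisfy: λ₋ ≤ 0 for 0 < α ≤ 1, λ₋ > 0 for α > 1, and λ₊ ≥ 4 for all α > 0. -/
/-! Substituting `t = √(1 + 8α)` (so `α = (t² - 1)/8` and `(1 + 8α)^{3/2} = t³`) factors both edges:
`λ₋ = (t - 3)³ / (8(t - 1))` and `λ₊ - 4 = (t - 1)(t² + 10t + 5) / (8(t + 1))`.
Since `t > 1`, and `t ≤ 3` exactly when `α ≤ 1`, all three claims are sign checks. -/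

lemma Real.sqrt_pow_three {x : ℝ} (hx : 0 ≤ x) : √(x ^ 3) = √x ^ 3 := by
  rw [← Real.sq_sqrt hx, ← pow_mul, mul_comm, pow_mul, Real.sqrt_sq (by positivity), Real.sq_sqrt hx]

lemma edgeMinus_eq_of_sq_eq {α t : ℝ} (hα : α ≠ 0) (ht : t ^ 2 = 1 + 8 * α) :
    (-1 + 20 * α + 8 * α ^ 2 - t ^ 3) / (8 * α) = (t - 3) ^ 3 / (8 * (t - 1)) := by
  have ht1 : t - 1 ≠ 0 := fun h => hα (by nlinarith [sub_eq_zero.mp h])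
  obtain rfl : α = (t ^ 2 - 1) / 8 := by linarith
  have ht2 : t ^ 2 - 1 ≠ 0 := by simpa using hα
  field_simp
  ring

lemma edgePlus_eq_of_sq_eq {α t : ℝ} (hα : α ≠ 0) (ht : t ^ 2 = 1 + 8 * α) :
    (-1 + 20 * α + 8 * α ^ 2 + t ^ 3) / (8 * α) =
      4 + (t - 1) * (t ^ 2 + 10 * t + 5) / (8 * (t + 1)) := by
  have ht1 : t + 1 ≠ 0 := fun h => hα (by nlinarith [eq_neg_of_add_eq_zero_left h])
  obtain rfl : α = (t ^ 2 - 1) / 8 := by linarith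
  have ht2 : t ^ 2 - 1 ≠ 0 := by simpa using hα
  field_simp
  ring

/-- For M = 2 with α₁ = α₂ = α, the edge points
λ_± = (-1 + 20α + 8α² ± (1+8α)^{3/2})/(8α) satisfy: λ₋ ≤ 0 for 0 < α ≤ 1,
λ₋ > 0 for α > 1, and λ₊ ≥ 4 for all α > 0. -/
theorem m2_equal_alpha_edges (α : ℝ) (hα : 0 < α) :
    let lamM : ℝ := (-1 + 20 * α + 8 * α ^ 2 - Real.sqrt ((1 + 8 * α) ^ 3)) / (8 * α)
    let lamP : ℝ := (-1 + 20 * α + 8 * α ^ 2 + Real.sqrt ((1 + 8 * α) ^ 3)) / (8 * α)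
    (α ≤ 1 → lamM ≤ 0) ∧ (1 < α → 0 < lamM) ∧ 4 ≤ lamP := by
  intro lamM lamP
  set t := Real.sqrt (1 + 8 * α)
  have ht_sq : t ^ 2 = 1 + 8 * α := Real.sq_sqrt (by positivity)
  have ht_nonneg : 0 ≤ t := Real.sqrt_nonneg _
  have ht_one : 1 < t := by nlinarith
  have hcube : Real.sqrt ((1 + 8 * α) ^ 3) = t ^ 3 := Real.sqrt_pow_three (by positivity)
  have hM : lamM = (t - 3) ^ 3 / (8 * (t - 1)) := by
    rw [← edgeMinus_eq_of_sq_eq hα.ne' ht_sq, ← hcube]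
  have hP : lamP = 4 + (t - 1) * (t ^ 2 + 10 * t + 5) / (8 * (t + 1)) := by
    rw [← edgePlus_eq_of_sq_eq hα.ne' ht_sq, ← hcube]
  refine ⟨fun hα1 => ?_, fun hα1 => ?_, ?_⟩
  · have ht3 : t ≤ 3 := by nlinarith
    rw [hM]
    exact div_nonpos_of_nonpos_of_nonneg (Odd.pow_nonpos (by decide) (by linarith)) (by linarith)
  · have ht3 : 3 < t := by nlinarith
    rw [hM]
    exact div_pos (pow_pos (by linarith) 3) (by linarith)
  · rw [hP]
    have ht_one_le : 0 ≤ t - 1 := by linarith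
    exact le_add_of_nonneg_right (by positivity)
end

section
/- For M = 3 with α₁ = α₂ = α₃ = α > 0, the edge points λ_± = (2 ± 2√((1+3α)³(9α-1)²) + 9α(-1+3α(4+α)))/(27α²) satisfy λ₊ > 0 for all α > 0, and at α = 1 one has λ₊ = 256/27 and λ₋ = 0. -/
/- Both edge points are `(p(α) ± 2√D(α)) / (27α²)` with `p(α) = 2 - 9α + 108α² + 27α³`.
Since `108α² - 9α + 2` has negative discriminant, `p(α) > 0` for `α ≥ 0`, so `λ₊ > 0`.
At `α = 1` the radicand is `4³ · 8² = 64²` and `p(1) = 128`, giving `λ₊ = 256/27`, `λ₋ = 0`. -/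

lemma edge_numerator_pos {α : ℝ} (hα : 0 ≤ α) : 0 < 2 + 9 * α * (-1 + 3 * α * (4 + α)) := by
  nlinarith [sq_nonneg (α - 1 / 24), pow_nonneg hα 3]

lemma edge_sqrt_at_one : Real.sqrt ((1 + 3 * (1 : ℝ)) ^ 3 * (9 * 1 - 1) ^ 2) = 64 := by
  rw [show (1 + 3 * (1 : ℝ)) ^ 3 * (9 * 1 - 1) ^ 2 = 64 ^ 2 by norm_num,
    Real.sqrt_sq (by norm_num)]

/-- For M = 3 with α₁ = α₂ = α₃ = α > 0, the edge points
λ_± = (2 ± 2√((1+3α)³(9α-1)²) + 9α(-1+3α(4+α)))/(27α²) satisfy λ₊ > 0 for all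
α > 0, and at α = 1 one has λ₊ = 256/27 and λ₋ = 0. -/
theorem m3_equal_alpha_edges (α : ℝ) (hα : 0 < α) :
    let lamP : ℝ := (2 + 2 * Real.sqrt ((1 + 3 * α) ^ 3 * (9 * α - 1) ^ 2)
        + 9 * α * (-1 + 3 * α * (4 + α))) / (27 * α ^ 2)
    let lamM : ℝ := (2 - 2 * Real.sqrt ((1 + 3 * α) ^ 3 * (9 * α - 1) ^ 2)
        + 9 * α * (-1 + 3 * α * (4 + α))) / (27 * α ^ 2)
    0 < lamP ∧ (α = 1 → lamP = 256 / 27 ∧ lamM = 0) := by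
  intro lamP lamM
  refine ⟨div_pos ?_ (by positivity), fun hα1 => ?_⟩
  · have hsqrt := Real.sqrt_nonneg ((1 + 3 * α) ^ 3 * (9 * α - 1) ^ 2)
    linarith [edge_numerator_pos hα.le]
  · subst hα1
    constructor <;> simp only [lamP, lamM, edge_sqrt_at_one] <;> norm_num
end

section
/- The Fuss–Catalan density series ρ_M(λ) = (1/π) Σ_{n≥1} ((-1)^{n-1}/n) binom(n/(M+1), n-1) λ^{n/(M+1)-1} sin(πn/(M+1)) specializes for M = 1 to ρ₁(λ) = (1/(2π)) √((4-λ)/λ) for λ ∈ (0,4). -/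
/-!
Only the even terms survive, since `sin (π (n + 1) / 2)` vanishes for odd `n`. For `n = 2m` the
duplication identity `4 ^ m * C((2m + 1)/2, 2m) = (2m + 1) * C(1/2, m)` cancels the factor
`1 / (2m + 1)`, and the series becomes `π⁻¹ x^{-1/2} ∑ C(1/2, m) (-x/4)^m`, which is the binomial
series of `π⁻¹ x^{-1/2} (1 - x/4)^{1/2} = √((4 - x)/x) / (2π)`, convergent because `x/4 < 1`.
-/

/-- Generalized binomial coefficient x(x-1)⋯(x-k+1)/k!. -/
noncomputable def genBinom (x : ℝ) (k : ℕ) : ℝ :=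
  (∏ i ∈ Finset.range k, (x - i)) / (Nat.factorial k)

open Finset Nat Real

open Polynomial in
lemma genBinom_eq_ringChoose (x : ℝ) (k : ℕ) : genBinom x k = Ring.choose x k := by
  rw [Ring.choose_eq_smul, ← aeval_eq_smeval, aeval_def, eval₂_eq_eval_map, descPochhammer_map,
    descPochhammer_eval_eq_prod_range, genBinom, smul_eq_mul, div_eq_inv_mul]

lemma hasSum_genBinom_mul_pow (a : ℝ) {t : ℝ} (ht : |t| < 1) :
    HasSum (fun n => genBinom a n * t ^ n) ((1 + t) ^ a) := by
  have := (one_add_rpow_hasFPowerSeriesOnBall_zero (a := a)).hasSum (y := t)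
    (by simpa [Metric.mem_eball, edist_dist] using ht)
  simpa [genBinom_eq_ringChoose, binomialSeries, FormalMultilinearSeries.ofScalars_apply_eq,
    mul_comm] using this

lemma prod_range_two_mul_half_sub (m : ℕ) :
    (∏ i ∈ range (2 * m), ((2 * m + 1 : ℝ) / 2 - i)) * (4 ^ m * m !)
      = (2 * m + 1) * (2 * m)! * ∏ i ∈ range m, ((1 : ℝ) / 2 - i) := by
  induction m with
  | zero => simp
  | succ m ih =>
    have shift : ∏ i ∈ range (2 * m + 1), ((2 * ↑(m + 1) + 1 : ℝ) / 2 - ↑(i + 1))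
        = ∏ i ∈ range (2 * m + 1), ((2 * m + 1 : ℝ) / 2 - i) :=
      prod_congr rfl fun i _ => by push_cast; ring
    rw [show 2 * (m + 1) = 2 * m + 1 + 1 by ring, prod_range_succ', shift, prod_range_succ,
      prod_range_succ, factorial_succ, factorial_succ, factorial_succ]
    push_cast
    linear_combination (1 - 2 * (m : ℝ)) * (2 * m + 3) * (m + 1) * ih

lemma genBinom_two_mul_half (m : ℕ) :
    genBinom ((2 * m + 1) / 2) (2 * m) * 4 ^ m = (2 * m + 1) * genBinom (1 / 2) m := by
  rw [genBinom, genBinom, div_mul_eq_mul_div, mul_div_assoc',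
    div_eq_div_iff (by positivity) (by positivity)]
  linear_combination prod_range_two_mul_half_sub m

lemma sin_pi_mul_two_mul_add_one_div_two (m : ℕ) : sin (π * (2 * m + 1) / 2) = (-1) ^ m := by
  rw [show π * (2 * m + 1) / 2 = π / 2 + (m : ℤ) * π by push_cast; ring, sin_add_int_mul_pi,
    sin_pi_div_two, mul_one, zpow_natCast]

/-- The summand of the series, shifted so that index `n` is the paper's `n + 1`. -/
noncomputable def fussCatalanTerm (x : ℝ) (n : ℕ) : ℝ :=
  (1 / π) * ((-1 : ℝ) ^ n / (n + 1)) * genBinom (((n : ℝ) + 1) / 2) n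
    * x ^ (((n : ℝ) + 1) / 2 - 1) * sin (π * ((n : ℝ) + 1) / 2)

lemma fussCatalanTerm_two_mul_add_one (x : ℝ) (k : ℕ) : fussCatalanTerm x (2 * k + 1) = 0 := by
  rw [fussCatalanTerm,
    show π * (((2 * k + 1 : ℕ) : ℝ) + 1) / 2 = (k + 1 : ℕ) * π by push_cast; ring,
    sin_nat_mul_pi, mul_zero]

lemma fussCatalanTerm_two_mul {x : ℝ} (hx : 0 < x) (m : ℕ) :
    fussCatalanTerm x (2 * m)
      = π⁻¹ * x ^ (-(1 / 2) : ℝ) * (genBinom (1 / 2) m * (-(x / 4)) ^ m) := by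
  have hbinom : genBinom ((2 * m + 1) / 2) (2 * m) = (2 * m + 1) * genBinom (1 / 2) m / 4 ^ m :=
    eq_div_of_mul_eq (by positivity) (genBinom_two_mul_half m)
  have hpow : x ^ ((2 * m + 1 : ℝ) / 2 - 1) = x ^ m * x ^ (-(1 / 2) : ℝ) := by
    rw [← rpow_natCast, ← rpow_add hx]
    ring_nf
  rw [fussCatalanTerm]
  push_cast
  rw [hbinom, hpow, sin_pi_mul_two_mul_add_one_div_two, pow_mul, neg_one_sq, one_pow,
    neg_pow (x / 4), div_pow]
  field_simp

lemma hasSum_fussCatalanTerm {x : ℝ} (hx0 : 0 < x) (hx4 : x < 4) :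
    HasSum (fussCatalanTerm x) (π⁻¹ * x ^ (-(1 / 2) : ℝ) * (1 + -(x / 4)) ^ (1 / 2 : ℝ)) := by
  have ht : |-(x / 4)| < 1 := by rw [abs_neg, abs_of_pos (by positivity)]; linarith
  have heven := (hasSum_genBinom_mul_pow (1 / 2) ht).mul_left (π⁻¹ * x ^ (-(1 / 2) : ℝ))
  rw [← funext (fussCatalanTerm_two_mul hx0)] at heven
  refine ((mul_right_injective₀ two_ne_zero).hasSum_iff ?_).mp heven
  intro n hn
  obtain ⟨k, rfl | rfl⟩ := Nat.even_or_odd' n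
  · exact absurd ⟨k, rfl⟩ hn
  · exact fussCatalanTerm_two_mul_add_one x k

/-- The Fuss–Catalan density series for M = 1,
ρ₁(λ) = (1/π) Σ_{n≥1} ((-1)^{n-1}/n) C(n/2, n-1) λ^{n/2-1} sin(πn/2),
converges for 0 < λ < 4 to the Marcenko–Pastur form (1/(2π))√((4-λ)/λ). -/
theorem fuss_catalan_M1 (x : ℝ) (hx0 : 0 < x) (hx4 : x < 4) :
    HasSum
      (fun n : ℕ =>
        (1 / Real.pi) * ((-1 : ℝ) ^ n / (n + 1)) * genBinom (((n : ℝ) + 1) / 2) n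
          * x ^ (((n : ℝ) + 1) / 2 - 1) * Real.sin (Real.pi * ((n : ℝ) + 1) / 2))
      ((1 / (2 * Real.pi)) * Real.sqrt ((4 - x) / x)) := by
  have hvalue : π⁻¹ * x ^ (-(1 / 2) : ℝ) * (1 + -(x / 4)) ^ (1 / 2 : ℝ)
      = 1 / (2 * π) * √((4 - x) / x) := by
    rw [rpow_neg hx0.le, ← sqrt_eq_rpow, ← sqrt_eq_rpow,
      show (4 - x) / x = 2 ^ 2 * (1 + -(x / 4)) / x by ring, sqrt_div' _ hx0.le,
      sqrt_mul' _ (by linarith), sqrt_sq zero_le_two]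
    field_simp
  exact hvalue ▸ hasSum_fussCatalanTerm hx0 hx4
end
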